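/- arXiv:2002.06560 — 3 statements merged into one kernel-verified Lean document; each statement's English description precedes it below -/
import Mathlib

section
/- Let L be a distributive lattice and let α : H(L) → 2 be a continuous order-preserving map with α(constant map 0) = 0 and α(constant map 1) = 1. Then there exists a unique b ∈ L such that α(φ) = φ(b) for every φ ∈ H(L). Consequently the evaluation map b ↦ (φ ↦ φ(b)) is a lattice isomorphism from L onto K(H(L)). -/
/-- A map between lattices preserving binary joins and meets (no bound constants
in the language). -/
def IsLatHom {α β : Type*} [Lattice α] [Lattice β] (f : α → β) : Prop :=
  (∀ a b, f (a ⊔ b) = f a ⊔ f b) ∧ (∀ a b, f (a ⊓ b) = f a ⊓ f b)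

/-- The set of lattice homomorphisms from `L` to the two-element lattice `Bool`. -/
def HSet (L : Type*) [Lattice L] : Set (L → Bool) := {f | IsLatHom f}

/-- `H(L)`: the space of lattice homomorphisms `L → 2` with subspace topology from
`2^L` (`2 = Bool` discrete) and pointwise order. -/
abbrev HSp (L : Type*) [Lattice L] : Type _ := ↥(HSet L)

/-- The constant map `1` as an element of `H(L)`. -/
def topEl (L : Type*) [Lattice L] : HSp L :=
  ⟨fun _ => true, ⟨fun _ _ => by simp, fun _ _ => by simp⟩⟩

/-- The constant map `0` as an element of `H(L)`. -/
def botEl (L : Type*) [Lattice L] : HSp L :=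
  ⟨fun _ => false, ⟨fun _ _ => by simp, fun _ _ => by simp⟩⟩

/-- `K(H(L))`: continuous order-preserving maps `H(L) → 2` sending the constant map `0`
to `0` and the constant map `1` to `1`. -/
def KH (L : Type*) [Lattice L] : Type _ :=
  {α : HSp L → Bool // Continuous α ∧ Monotone α ∧ α (botEl L) = false ∧ α (topEl L) = true}

/-- The evaluation map `L → K(H(L))`, `b ↦ (φ ↦ φ(b))`. -/
def evalKH (L : Type*) [Lattice L] (b : L) : KH L :=
  ⟨fun φ => (φ : L → Bool) b,
    (continuous_apply b).comp continuous_subtype_val,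
    fun φ ψ h => h b, rfl, rfl⟩

open Order
section Helpers
variable {L : Type*} [Lattice L]

lemma homMono (φ : HSp L) : Monotone φ.1 := by
  intro a b hab
  have := φ.2.1 a b
  rw [sup_eq_right.mpr hab] at this
  rw [this]
  exact le_sup_left

lemma hset_closed : IsClosed (HSet L) := by
  have : HSet L = (⋂ (a : L) (b : L), {f : L → Bool | f (a ⊔ b) = f a ⊔ f b}) ∩
      (⋂ (a : L) (b : L), {f : L → Bool | f (a ⊓ b) = f a ⊓ f b}) := by
    ext f
    simp [HSet, IsLatHom, Set.mem_iInter, forall_and]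
  rw [this]
  have cont : ∀ (g : Bool → Bool → Bool) (a b : L),
      Continuous fun f : L → Bool => g (f a) (f b) := by
    intro g a b
    have h1 : Continuous (fun p : Bool × Bool => g p.1 p.2) := continuous_of_discreteTopology
    show Continuous ((fun p : Bool × Bool => g p.1 p.2) ∘ (fun f : L → Bool => (f a, f b)))
    exact h1.comp (Continuous.prodMk (continuous_apply a) (continuous_apply b))
  refine IsClosed.inter ?_ ?_ <;>
    refine isClosed_iInter fun a => isClosed_iInter fun b => isClosed_eq (continuous_apply _) ?_
  · exact cont (· ⊔ ·) a b
  · exact cont (· ⊓ ·) a b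

instance : CompactSpace (HSp L) :=
  isCompact_iff_compactSpace.mp hset_closed.isCompact

def V (b : L) : Set (HSp L) := {φ | φ.1 b = true}

lemma V_open (b : L) : IsOpen (V b) := by
  have : V (L := L) b = (fun φ : HSp L => φ.1 b) ⁻¹' {true} := rfl
  rw [this]
  exact (isOpen_discrete _).preimage ((continuous_apply b).comp continuous_subtype_val)

lemma V_closed (b : L) : IsClosed (V b) := by
  have : V (L := L) b = (fun φ : HSp L => φ.1 b) ⁻¹' {true} := rfl
  rw [this]
  exact (isClosed_discrete _).preimage ((continuous_apply b).comp continuous_subtype_val)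

lemma exists_eval {L : Type*} [DistribLattice L] (α : HSp L → Bool) (hc : Continuous α)
    (hm : Monotone α) (hbot : α (botEl L) = false) (htop : α (topEl L) = true) :
    ∃ b : L, ∀ φ : HSp L, α φ = φ.1 b := by
  classical
  set U : Set (HSp L) := α ⁻¹' {true} with hU
  have hUopen : IsOpen U := (isOpen_discrete _).preimage hc
  have hUclosed : IsClosed U := (isClosed_discrete _).preimage hc
  -- Step A
  have stepA : ∀ ψ : HSp L, ψ ∉ U → ∃ c : L, ψ.1 c = false ∧ ∀ φ ∈ U, φ.1 c = true := by
    intro ψ hψ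
    have hcov : U ⊆ ⋃ i : {p : L // ψ.1 p = false}, V i.1 := by
      intro φ hφ
      have : ∃ p, φ.1 p = true ∧ ψ.1 p = false := by
        by_contra hno
        push_neg at hno
        have hle : φ ≤ ψ := by
          intro p
          cases hp : φ.1 p with
          | false => simp
          | true =>
            have := hno p hp
            simp only [Bool.not_eq_false] at this
            simp [this]
        have h2 := hm hle
        rw [hφ] at h2
        apply hψ
        show α ψ = true
        cases h3 : α ψ with
        | true => rfl
        | false => rw [h3] at h2; exact absurd h2 (by simp)
      obtain ⟨p, hp1, hp2⟩ := this
      exact Set.mem_iUnion.mpr ⟨⟨p, hp2⟩, hp1⟩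
    obtain ⟨t, ht⟩ := (hUclosed.isCompact).elim_finite_subcover
      (fun i : {p : L // ψ.1 p = false} => V i.1) (fun i => V_open i.1) hcov
    have htopU : topEl L ∈ U := by simp [hU, htop]
    have htne : t.Nonempty := by
      obtain ⟨i, hi, -⟩ := Set.mem_iUnion₂.mp (ht htopU)
      exact ⟨i, hi⟩
    refine ⟨t.sup' htne (fun i => i.1), ?_, ?_⟩
    · have hmap : ψ.1 (t.sup' htne (fun i => i.1)) = t.sup' htne (fun i => ψ.1 i.1) :=
        map_finset_sup' (SupHom.mk ψ.1 ψ.2.1) htne (fun i => i.1)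
      rw [hmap]
      have hle : t.sup' htne (fun i => ψ.1 i.1) ≤ false :=
        Finset.sup'_le htne _ (fun i _ => le_of_eq i.2)
      exact le_antisymm hle (Bool.false_le _)
    · intro φ hφ
      obtain ⟨i, hi, hmem⟩ := Set.mem_iUnion₂.mp (ht hφ)
      have h1 : φ.1 i.1 = true := hmem
      have h2 : i.1 ≤ t.sup' htne (fun i => i.1) := Finset.le_sup' _ hi
      have := homMono φ h2
      rw [h1] at this
      exact le_antisymm (Bool.le_true _) this
  choose c hc1 hc2 using fun (i : {ψ : HSp L // ψ ∉ U}) => stepA i.1 i.2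
  -- Step B
  have hcov2 : Uᶜ ⊆ ⋃ i : {ψ : HSp L // ψ ∉ U}, (V (c i))ᶜ := by
    intro ψ hψ
    refine Set.mem_iUnion.mpr ⟨⟨ψ, hψ⟩, ?_⟩
    show ¬ (ψ.1 (c ⟨ψ, hψ⟩) = true)
    rw [hc1 ⟨ψ, hψ⟩]
    simp
  obtain ⟨t, ht⟩ := (hUopen.isClosed_compl.isCompact).elim_finite_subcover
    (fun i : {ψ : HSp L // ψ ∉ U} => (V (c i))ᶜ) (fun i => (V_closed (c i)).isOpen_compl) hcov2
  have hbotU : botEl L ∈ Uᶜ := by simp [hU, hbot]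
  have htne : t.Nonempty := by
    obtain ⟨i, hi, -⟩ := Set.mem_iUnion₂.mp (ht hbotU)
    exact ⟨i, hi⟩
  refine ⟨t.inf' htne (fun i => c i), fun φ => ?_⟩
  by_cases hφ : φ ∈ U
  · have h1 : α φ = true := hφ
    rw [h1]
    have hmap : φ.1 (t.inf' htne (fun i => c i)) = t.inf' htne (fun i => φ.1 (c i)) :=
      map_finset_inf' (InfHom.mk φ.1 φ.2.2) htne (fun i => c i)
    rw [hmap]
    have hge : true ≤ t.inf' htne (fun i => φ.1 (c i)) :=
      Finset.le_inf' htne _ (fun i _ => ge_of_eq (hc2 i φ hφ))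
    exact le_antisymm hge (Bool.le_true _)
  · have h1 : α φ = false := by
      cases h : α φ with
      | false => rfl
      | true => exact absurd h hφ
    rw [h1]
    obtain ⟨i, hi, hmem⟩ := Set.mem_iUnion₂.mp (ht hφ)
    have h2 : φ.1 (c i) = false := by
      simpa [V] using hmem
    have h3 : t.inf' htne (fun i => c i) ≤ c i := Finset.inf'_le _ hi
    have := homMono φ h3
    rw [h2] at this
    exact (le_antisymm this (Bool.false_le _)).symm


/-- Separation: if `¬ b ≤ b'` there is a hom to Bool with `f b = true`, `f b' = false`. -/
lemma sep_hom {L : Type*} [DistribLattice L] {b b' : L} (h : ¬ b ≤ b') :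
    ∃ φ : HSp L, φ.1 b = true ∧ φ.1 b' = false := by
  classical
  set L' := WithBot (WithTop L)
  let e : L → L' := fun a => ((a : WithTop L) : L')
  have he : ∀ x y : L, e x ≤ e y ↔ x ≤ y := by
    intro x y
    show ((x : WithTop L) : L') ≤ ((y : WithTop L) : L') ↔ x ≤ y
    rw [WithBot.coe_le_coe, WithTop.coe_le_coe]
  have hsup : ∀ x y : L, e (x ⊔ y) = e x ⊔ e y := by
    intro x y; push_cast [e]; rfl
  have hinf : ∀ x y : L, e (x ⊓ y) = e x ⊓ e y := by
    intro x y; push_cast [e]; rfl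
  have hdisj : Disjoint ((PFilter.principal (e b) : PFilter L') : Set L')
      ((Ideal.principal (e b') : Ideal L') : Set L') := by
    rw [Set.disjoint_left]
    rintro x hx hx'
    exact h ((he b b').mp (le_trans hx hx'))
  obtain ⟨J, hJp, hJle, hJd⟩ := DistribLattice.prime_ideal_of_disjoint_filter_ideal hdisj
  refine ⟨⟨fun a => decide (e a ∉ J), ?_, ?_⟩, ?_, ?_⟩
  · intro x y
    have : e (x ⊔ y) ∈ J ↔ e x ∈ J ∧ e y ∈ J := by
      rw [hsup]
      constructor
      · intro hxy; exact ⟨J.lower le_sup_left hxy, J.lower le_sup_right hxy⟩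
      · rintro ⟨h1, h2⟩; exact J.sup_mem h1 h2
    by_cases hx : e x ∈ J <;> by_cases hy : e y ∈ J <;> simp_all
  · intro x y
    have : e (x ⊓ y) ∈ J ↔ e x ∈ J ∨ e y ∈ J := by
      rw [hinf]
      constructor
      · exact hJp.mem_or_mem
      · rintro (h1 | h1)
        · exact J.lower inf_le_left h1
        · exact J.lower inf_le_right h1
    by_cases hx : e x ∈ J <;> by_cases hy : e y ∈ J <;> simp_all
  · simp only [decide_eq_true_eq]
    intro hb
    exact Set.disjoint_left.mp hJd (PFilter.mem_principal.mpr le_rfl) hb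
  · simp only [decide_eq_false_iff_not, not_not]
    exact hJle (Ideal.mem_principal.mpr le_rfl)

lemma eval_inj {L : Type*} [DistribLattice L] {b b' : L}
    (h : ∀ φ : HSp L, φ.1 b = φ.1 b') : b = b' := by
  have key : ∀ x y : L, (∀ φ : HSp L, φ.1 x = φ.1 y) → x ≤ y := by
    intro x y hxy
    by_contra hle
    obtain ⟨φ, h1, h2⟩ := sep_hom hle
    rw [hxy φ, h2] at h1
    exact absurd h1 (by simp)
  exact le_antisymm (key b b' h) (key b' b (fun φ => (h φ).symm))

end Helpers

/-- Let `L` be a distributive lattice and `α : H(L) → 2` a continuous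
order-preserving map with `α(const 0) = 0` and `α(const 1) = 1`.  Then there is a unique
`b ∈ L` with `α(φ) = φ(b)` for all `φ ∈ H(L)`.  Consequently the evaluation map
`b ↦ (φ ↦ φ(b))` is a lattice isomorphism from `L` onto `K(H(L))` (the latter carrying
the pointwise lattice operations). -/
theorem evaluation_isomorphism (L : Type*) [DistribLattice L] :
    (∀ α : HSp L → Bool, Continuous α → Monotone α →
        α (botEl L) = false → α (topEl L) = true →
        ∃! b : L, ∀ φ : HSp L, α φ = (φ : L → Bool) b) ∧
      Function.Bijective (evalKH L) ∧
      (∀ a b : L, ∀ φ : HSp L,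
        (evalKH L (a ⊔ b)).1 φ = (evalKH L a).1 φ ⊔ (evalKH L b).1 φ) ∧
      (∀ a b : L, ∀ φ : HSp L,
        (evalKH L (a ⊓ b)).1 φ = (evalKH L a).1 φ ⊓ (evalKH L b).1 φ) := by
  refine ⟨?_, ⟨?_, ?_⟩, fun a b φ => φ.2.1 a b, fun a b φ => φ.2.2 a b⟩
  · intro α hc hm hbot htop
    obtain ⟨b, hb⟩ := exists_eval α hc hm hbot htop
    refine ⟨b, hb, fun b' hb' => ?_⟩
    exact eval_inj (fun φ => (hb' φ).symm.trans (hb φ))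
  · intro a b hab
    have h : ∀ φ : HSp L, φ.1 a = φ.1 b := fun φ => congrFun (congrArg Subtype.val hab) φ
    exact eval_inj h
  · intro α
    obtain ⟨b, hb⟩ := exists_eval α.1 α.2.1 α.2.2.1 α.2.2.2.1 α.2.2.2.2
    exact ⟨b, Subtype.ext (funext fun φ => (hb φ).symm)⟩
end

section
/- Let L and K be distributive lattices. The assignment f ↦ (φ ↦ φ ∘ f) is a bijection from the set of lattice homomorphisms L → K onto the set of continuous order-preserving maps from H(K) to H(L) that send the constant map 1 to the constant map 1 and the constant map 0 to the constant map 0 (that is, onto the morphisms of doubly-pointed Priestley spaces H(K) → H(L)). -/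
theorem comp_isLatHom {L K : Type*} [Lattice L] [Lattice K]
    {φ : K → Bool} (hφ : IsLatHom φ) {f : L → K} (hf : IsLatHom f) :
    IsLatHom (φ ∘ f) :=
  ⟨fun a b => by simp [Function.comp, hf.1 a b, hφ.1], 
   fun a b => by simp [Function.comp, hf.2 a b, hφ.2]⟩

/-- The morphisms of doubly-pointed Priestley spaces `H(K) → H(L)`: continuous
order-preserving maps sending the constant map `1` to the constant map `1` and the
constant map `0` to the constant map `0`. -/
def PMor (L K : Type*) [Lattice L] [Lattice K] : Type _ :=
  {Φ : HSp K → HSp L // Continuous Φ ∧ Monotone Φ ∧ Φ (topEl K) = topEl L ∧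
    Φ (botEl K) = botEl L}

/-- The assignment `f ↦ (φ ↦ φ ∘ f)` from lattice homomorphisms `L → K` to
doubly-pointed Priestley morphisms `H(K) → H(L)`. -/
def dualMap (L K : Type*) [Lattice L] [Lattice K]
    (f : {f : L → K // IsLatHom f}) : PMor L K :=
  ⟨fun φ => ⟨(φ : K → Bool) ∘ (f : L → K), comp_isLatHom φ.2 f.2⟩,
    by
      apply Continuous.subtype_mk
      exact continuous_pi fun a => (continuous_apply ((f : L → K) a)).comp
        continuous_subtype_val,
    fun φ ψ h a => h ((f : L → K) a),
    Subtype.ext rfl, Subtype.ext rfl⟩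

section Aux

variable {K : Type*} [DistribLattice K]

open Order

lemma latHom_monotone {α β : Type*} [Lattice α] [Lattice β] {f : α → β}
    (hf : IsLatHom f) : Monotone f := fun a b hab => by
  have : f (a ⊓ b) = f a ⊓ f b := hf.2 a b
  rw [inf_eq_left.2 hab] at this
  exact this ▸ inf_le_right

lemma exists_hom_true_false {x y : K} (h : ¬ x ≤ y) :
    ∃ φ : HSp K, (φ : K → Bool) x = true ∧ (φ : K → Bool) y = false := by
  classical
  set K' := WithBot (WithTop K) with hK'
  let e : K → K' := fun z => ((z : WithTop K) : K')
  have he : ∀ {a b : K}, e a ≤ e b ↔ a ≤ b := by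
    intro a b
    rw [WithBot.coe_le_coe, WithTop.coe_le_coe]
  have hsup : ∀ a b : K, e (a ⊔ b) = e a ⊔ e b := by intro a b; simp only [e, WithTop.coe_sup, WithBot.coe_sup]
  have hinf : ∀ a b : K, e (a ⊓ b) = e a ⊓ e b := by intro a b; simp only [e, WithTop.coe_inf, WithBot.coe_inf]
  have hdisj : Disjoint ((Order.PFilter.principal (e x) : Order.PFilter K') : Set K')
      ((Order.Ideal.principal (e y) : Order.Ideal K') : Set K') := by
    rw [Set.disjoint_left]
    intro z hz1 hz2
    have h1 : e x ≤ z := hz1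
    have h2 : z ≤ e y := hz2
    exact h (he.1 (h1.trans h2))
  obtain ⟨J, hJprime, hIJ, hJdisj⟩ :=
    DistribLattice.prime_ideal_of_disjoint_filter_ideal hdisj
  have hxJ : e x ∉ J := fun hx =>
    Set.disjoint_left.1 hJdisj (Order.PFilter.mem_principal.2 le_rfl) hx
  have hyJ : e y ∈ J := hIJ (Order.Ideal.mem_principal.2 le_rfl)
  refine ⟨⟨fun z => decide (e z ∉ J), ?_, ?_⟩, by simp [hxJ], by simp [hyJ]⟩
  · intro a b
    have : e (a ⊔ b) ∉ J ↔ (e a ∉ J ∨ e b ∉ J) := by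
      rw [hsup]
      constructor
      · intro hs
        by_contra hcon
        push_neg at hcon
        exact hs (Order.Ideal.sup_mem hcon.1 hcon.2)
      · rintro (ha | hb) hs
        · exact ha (J.lower le_sup_left hs)
        · exact hb (J.lower le_sup_right hs)
    simp only [this]
    by_cases ha : e a ∈ J <;> by_cases hb : e b ∈ J <;> simp [ha, hb]
  · intro a b
    have : e (a ⊓ b) ∉ J ↔ (e a ∉ J ∧ e b ∉ J) := by
      rw [hinf]
      constructor
      · intro hs
        exact ⟨fun ha => hs (J.lower inf_le_left ha),
               fun hb => hs (J.lower inf_le_right hb)⟩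
      · intro ⟨ha, hb⟩ hs
        rcases hJprime.mem_or_mem hs with h' | h' <;> [exact ha h'; exact hb h']
    simp only [this]
    by_cases ha : e a ∈ J <;> by_cases hb : e b ∈ J <;> simp [ha, hb]

lemma hom_separates {x y : K}
    (h : ∀ φ : HSp K, (φ : K → Bool) x = (φ : K → Bool) y) : x = y := by
  by_contra hne
  have key : ∀ {a b : K}, (∀ φ : HSp K, (φ : K → Bool) a = (φ : K → Bool) b) → a ≤ b := by
    intro a b hab
    by_contra hle
    obtain ⟨φ, h1, h2⟩ := exists_hom_true_false hle
    rw [hab φ] at h1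
    exact absurd (h1.symm.trans h2) (by simp)
  exact hne (le_antisymm (key h) (key fun φ => (h φ).symm))

end Aux

section Top

variable {K : Type*} [DistribLattice K]

lemma isClosed_HSet : IsClosed (HSet K) := by
  have hrw : HSet K =
      (⋂ a, ⋂ b, {f : K → Bool | f (a ⊔ b) = f a ⊔ f b}) ∩
      (⋂ a, ⋂ b, {f : K → Bool | f (a ⊓ b) = f a ⊓ f b}) := by
    ext f
    simp only [HSet, IsLatHom, Set.mem_setOf_eq, Set.mem_inter_iff, Set.mem_iInter]
  rw [hrw]
  have hc : ∀ c : K, Continuous fun f : K → Bool => f c := fun c => continuous_apply c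
  refine IsClosed.inter (isClosed_iInter fun a => isClosed_iInter fun b => ?_)
    (isClosed_iInter fun a => isClosed_iInter fun b => ?_)
  · exact isClosed_eq (hc _)
      ((continuous_of_discreteTopology (f := fun p : Bool × Bool => p.1 ⊔ p.2)).comp
        ((hc a).prodMk (hc b)))
  · exact isClosed_eq (hc _)
      ((continuous_of_discreteTopology (f := fun p : Bool × Bool => p.1 ⊓ p.2)).comp
        ((hc a).prodMk (hc b)))

instance : CompactSpace (HSp K) :=
  isCompact_iff_compactSpace.mp isClosed_HSet.isCompact

end Top

section Clopen

variable {K : Type*} [DistribLattice K]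

/-- The basic clopen set `V b = {φ | φ b = true}`. -/
def Vset (b : K) : Set (HSp K) := {φ : HSp K | (φ : K → Bool) b = true}

lemma isClopen_Vset (b : K) : IsClopen (Vset (K := K) b) := by
  have hcont : Continuous fun φ : HSp K => (φ : K → Bool) b :=
    (continuous_apply b).comp continuous_subtype_val
  have : Vset (K := K) b = (fun φ : HSp K => (φ : K → Bool) b) ⁻¹' {true} := by
    ext φ; simp [Vset]
  rw [this]
  exact ⟨(isClosed_discrete _).preimage hcont, (isOpen_discrete _).preimage hcont⟩

lemma not_le_bool : ∀ {x y : Bool}, ¬ x ≤ y → x = true ∧ y = false := by decide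

lemma clopen_upset_eq {U : Set (HSp K)} (hC : IsClopen U) (hU : IsUpperSet U)
    (htop : topEl K ∈ U) (hbot : botEl K ∉ U) :
    ∃ b : K, U = Vset b := by
  classical
  -- Step 1: for each ψ ∉ U, find b with U ⊆ V b and ψ b = false
  have step1 : ∀ ψ : HSp K, ψ ∉ U → ∃ b : K, U ⊆ Vset b ∧ (ψ : K → Bool) b = false := by
    intro ψ hψ
    have hcover : U ⊆ ⋃ i : {b : K // (ψ : K → Bool) b = false}, Vset i.1 := by
      intro φ hφ
      have hle : ¬ (φ ≤ ψ) := fun hle => hψ (hU hle hφ)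
      have hle' : ¬ (φ : K → Bool) ≤ (ψ : K → Bool) := hle
      rw [Pi.le_def] at hle'
      push_neg at hle'
      obtain ⟨b, hb⟩ := hle'
      obtain ⟨h1, h2⟩ := not_le_bool (not_le_of_gt hb)
      exact Set.mem_iUnion.2 ⟨⟨b, h2⟩, (h1 : φ ∈ Vset b)⟩
    obtain ⟨t, ht⟩ := (hC.isClosed.isCompact).elim_finite_subcover
      (fun i : {b : K // (ψ : K → Bool) b = false} => Vset i.1)
      (fun i => (isClopen_Vset i.1).isOpen) hcover
    have htne : t.Nonempty := by
      obtain ⟨i, hi⟩ := Set.mem_iUnion₂.1 (ht htop)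
      exact ⟨i, hi.1⟩
    refine ⟨t.sup' htne (fun i => i.1), ?_, ?_⟩
    · intro φ hφ
      obtain ⟨i, hit, hiφ⟩ := Set.mem_iUnion₂.1 (ht hφ)
      have hmono := latHom_monotone φ.2 (Finset.le_sup' (fun i => i.1) hit)
      have : (φ : K → Bool) i.1 = true := hiφ
      exact le_antisymm (by simp) (this ▸ hmono)
    · have := Finset.sup'_induction (p := fun z : K => (ψ : K → Bool) z = false) htne
        (fun i => i.1)
        (fun a ha b hb => by
          show (ψ : K → Bool) (a ⊔ b) = false
          rw [ψ.2.1 a b, show (ψ : K → Bool) a = false from ha,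
            show (ψ : K → Bool) b = false from hb]
          rfl)
        (fun i _ => i.2)
      exact this
  -- Step 2: cover the complement of U
  choose g hg1 hg2 using step1
  have hcover : Uᶜ ⊆ ⋃ j : {ψ : HSp K // ψ ∉ U}, (Vset (g j.1 j.2))ᶜ := by
    intro ψ hψ
    exact Set.mem_iUnion.2 ⟨⟨ψ, hψ⟩, by simp [Vset, hg2 ψ hψ]⟩
  obtain ⟨t, ht⟩ := (hC.isOpen.isClosed_compl.isCompact).elim_finite_subcover
    (fun j : {ψ : HSp K // ψ ∉ U} => (Vset (g j.1 j.2))ᶜ)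
    (fun j => (isClopen_Vset _).compl.isOpen) hcover
  have htne : t.Nonempty := by
    obtain ⟨j, hj⟩ := Set.mem_iUnion₂.1 (ht hbot)
    exact ⟨j, hj.1⟩
  refine ⟨t.inf' htne (fun j => g j.1 j.2), ?_⟩
  ext φ
  constructor
  · intro hφ
    exact Finset.inf'_induction (p := fun z : K => (φ : K → Bool) z = true) htne
      (fun j => g j.1 j.2)
      (fun a ha b hb => by
        show (φ : K → Bool) (a ⊓ b) = true
        rw [φ.2.2 a b, show (φ : K → Bool) a = true from ha,
          show (φ : K → Bool) b = true from hb]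
        rfl)
      (fun j _ => hg1 j.1 j.2 hφ)
  · intro hφ
    by_contra hU'
    obtain ⟨j, hjt, hjφ⟩ := Set.mem_iUnion₂.1 (ht hU')
    have hle : t.inf' htne (fun j => g j.1 j.2) ≤ g j.1 j.2 :=
      Finset.inf'_le _ hjt
    have hmono := latHom_monotone φ.2 hle
    have h1 : (φ : K → Bool) (t.inf' htne (fun j => g j.1 j.2)) = true := hφ
    have h2 : (φ : K → Bool) (g j.1 j.2) ≠ true := hjφ
    rw [h1] at hmono
    exact h2 (le_antisymm (by simp) hmono)

end Clopen

lemma bool_eq_of_iff {x y : Bool} (h : x = true ↔ y = true) : x = y := by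
  cases x <;> cases y <;> simp_all

lemma bool_sup_true : ∀ {x y : Bool}, x ⊔ y = true ↔ x = true ∨ y = true := by decide

lemma bool_inf_true : ∀ {x y : Bool}, x ⊓ y = true ↔ x = true ∧ y = true := by decide


/-- For distributive lattices `L` and `K`, the assignment
`f ↦ (φ ↦ φ ∘ f)` is a bijection from the set of lattice homomorphisms `L → K` onto
the set of morphisms of doubly-pointed Priestley spaces `H(K) → H(L)`. -/
theorem dualMap_bijective (L K : Type*) [DistribLattice L] [DistribLattice K] :
    Function.Bijective (dualMap L K) := by
  constructor
  · intro f g h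
    apply Subtype.ext
    funext a
    apply hom_separates
    intro φ
    exact congrFun (congrArg Subtype.val (congrFun (congrArg Subtype.val h) φ)) a
  · rintro ⟨Φ, hcont, hmono, htop, hbot⟩
    -- the clopen up-sets determined by Φ
    have hcl : ∀ a : L, IsClopen {φ : HSp K | ((Φ φ : L → Bool)) a = true} := by
      intro a
      have hc : Continuous fun φ : HSp K => (Φ φ : L → Bool) a :=
        ((continuous_apply a).comp continuous_subtype_val).comp hcont
      have : {φ : HSp K | ((Φ φ : L → Bool)) a = true} =
          (fun φ : HSp K => (Φ φ : L → Bool) a) ⁻¹' {true} := by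
        ext φ; simp
      rw [this]
      exact ⟨(isClosed_discrete _).preimage hc, (isOpen_discrete _).preimage hc⟩
    have hup : ∀ a : L, IsUpperSet {φ : HSp K | ((Φ φ : L → Bool)) a = true} := by
      intro a φ ψ hle hφ
      have h1 : (Φ φ : L → Bool) a ≤ (Φ ψ : L → Bool) a := hmono hle a
      rw [show (Φ φ : L → Bool) a = true from hφ] at h1
      exact le_antisymm (by simp) h1
    have htop' : ∀ a : L, topEl K ∈ {φ : HSp K | ((Φ φ : L → Bool)) a = true} := by
      intro a; show (Φ (topEl K) : L → Bool) a = true; rw [htop]; rfl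
    have hbot' : ∀ a : L, botEl K ∉ {φ : HSp K | ((Φ φ : L → Bool)) a = true} := by
      intro a hmem
      have : (Φ (botEl K) : L → Bool) a = true := hmem
      rw [hbot] at this
      exact absurd this (by simp [botEl])
    choose b hb using fun a : L => clopen_upset_eq (hcl a) (hup a) (htop' a) (hbot' a)
    have key : ∀ (φ : HSp K) (a : L),
        (Φ φ : L → Bool) a = true ↔ (φ : K → Bool) (b a) = true := by
      intro φ a
      constructor
      · intro h; have : φ ∈ Vset (b a) := (hb a) ▸ h; exact this
      · intro h; have : φ ∈ {φ : HSp K | ((Φ φ : L → Bool)) a = true} :=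
          (hb a).symm ▸ (h : φ ∈ Vset (b a)); exact this
    have hlat : IsLatHom b := by
      constructor
      · intro a a'
        apply hom_separates
        intro φ
        apply bool_eq_of_iff
        rw [← key φ (a ⊔ a'), (Φ φ).2.1 a a', bool_sup_true, key φ a, key φ a',
          φ.2.1 (b a) (b a'), bool_sup_true]
      · intro a a'
        apply hom_separates
        intro φ
        apply bool_eq_of_iff
        rw [← key φ (a ⊓ a'), (Φ φ).2.2 a a', bool_inf_true, key φ a, key φ a',
          φ.2.2 (b a) (b a'), bool_inf_true]
    refine ⟨⟨b, hlat⟩, ?_⟩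
    apply Subtype.ext
    funext φ
    apply Subtype.ext
    funext a
    exact bool_eq_of_iff (key φ a).symm
end

section
/- Let L be a distributive lattice with greatest element 1 (included as a constant). The set H¹(L) of lattice homomorphisms φ : L → 2 with φ(1) = 1 is a closed subset of the product space 2^L (2 discrete), and with the pointwise order and subspace topology it is a compact Priestley space whose greatest element is the constant map 1. -/
/-- `H¹(L)` for a distributive lattice `L` with greatest element `1`: the set of
homomorphisms `φ : L → 2` (preserving `∨`, `∧` and `1`, i.e. `φ(1) = 1`). -/
def H1Set (L : Type*) [Lattice L] [OrderTop L] : Set (L → Bool) :=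
  {f | IsLatHom f ∧ f ⊤ = true}

/-- `H¹(L)` with the subspace topology from `2^L` (`2 = Bool` discrete) and the
pointwise order. -/
abbrev H1Sp (L : Type*) [Lattice L] [OrderTop L] : Type _ := ↥(H1Set L)

/-!
Each defining equation of `H¹(L)` involves only finitely many coordinates and is
closed in `2^L`, so `H¹(L)` is closed, hence compact by Tychonoff. Priestley separation
is inherited from `2^L`: if `φ ≰ ψ` then `φ a = 1` and `ψ a = 0` for some `a`, and
`{χ | χ a = 1}` is a clopen up-set.
-/

instance (priority := 100) DiscreteTopology.orderClosedTopology {α : Type*} [Preorder α]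
    [TopologicalSpace α] [DiscreteTopology α] : OrderClosedTopology α :=
  ⟨isClosed_discrete _⟩

instance (priority := 100) DiscreteTopology.priestleySpace {α : Type*} [Preorder α]
    [TopologicalSpace α] [DiscreteTopology α] : PriestleySpace α where
  priestley {x _} hxy := ⟨Set.Ici x, isClopen_discrete _, isUpperSet_Ici x, le_rfl, hxy⟩

instance Pi.priestleySpace {ι : Type*} {α : ι → Type*} [∀ i, Preorder (α i)]
    [∀ i, TopologicalSpace (α i)] [∀ i, PriestleySpace (α i)] :
    PriestleySpace (∀ i, α i) where
  priestley {x y} hxy := by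
    obtain ⟨i, hi⟩ := not_forall.mp hxy
    obtain ⟨U, hU, hUup, hxU, hyU⟩ := exists_isClopen_upper_of_not_le hi
    exact ⟨(fun z => z i) ⁻¹' U, hU.preimage (continuous_apply i),
      hUup.preimage fun _ _ h => h i, hxU, hyU⟩

instance Subtype.priestleySpace {α : Type*} [Preorder α] [TopologicalSpace α]
    [PriestleySpace α] (s : Set α) : PriestleySpace s where
  priestley {x y} hxy := by
    obtain ⟨U, hU, hUup, hxU, hyU⟩ :=
      exists_isClopen_upper_of_not_le (Subtype.coe_le_coe.not.mpr hxy)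
    exact ⟨Subtype.val ⁻¹' U, hU.preimage continuous_subtype_val,
      hUup.preimage fun _ _ h => h, hxU, hyU⟩

theorem isClosed_setOf_isLatHom {α β : Type*} [Lattice α] [Lattice β] [TopologicalSpace β]
    [T2Space β] [TopologicalLattice β] : IsClosed {f : α → β | IsLatHom f} := by
  simp only [IsLatHom, Set.ofPred_and, Set.ofPred_forall]
  exact .inter
    (isClosed_iInter fun a => isClosed_iInter fun b =>
      isClosed_eq (continuous_apply _) ((continuous_apply a).sup (continuous_apply b)))
    (isClosed_iInter fun a => isClosed_iInter fun b =>
      isClosed_eq (continuous_apply _) ((continuous_apply a).inf (continuous_apply b)))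

theorem isClosed_H1Set (L : Type*) [Lattice L] [OrderTop L] : IsClosed (H1Set L) :=
  isClosed_setOf_isLatHom.inter (isClosed_eq (continuous_apply ⊤) continuous_const)

/-- Let `L` be a distributive lattice with greatest element `1`
(as a constant).  The set `H¹(L)` of lattice homomorphisms `φ : L → 2` with `φ(1) = 1`
is closed in the product space `2^L`, and with the pointwise order and subspace
topology it is a compact Priestley space whose greatest element is the constant
map `1`. -/
theorem H1Sp_closed_compact_priestley (L : Type*) [DistribLattice L] [OrderTop L] :
    IsClosed (H1Set L) ∧ CompactSpace (H1Sp L) ∧ PriestleySpace (H1Sp L) ∧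
      (∃ t : H1Sp L, (t : L → Bool) = (fun _ => true) ∧ ∀ h : H1Sp L, h ≤ t) := by
  have hclosed := isClosed_H1Set L
  have htop : (fun _ : L => true) ∈ H1Set L := ⟨⟨fun _ _ => rfl, fun _ _ => rfl⟩, rfl⟩
  exact ⟨hclosed, isCompact_iff_compactSpace.mp hclosed.isCompact, inferInstance,
    ⟨_, htop⟩, rfl, fun _ _ => le_top⟩
end
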